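/- Let v and v' be votings of the nation such that under v, candidate A receives strictly more votes than B in every one of the K regions. Suppose v' is obtained from v by changing to B the vote of exactly the cells voting A inside the union of B_blk pairwise disjoint m_n × m_n noise-concentrated blocks contained in the nation, and suppose the fraction of cells voting A under v inside this union equals the national fraction α = (number of cells voting A under v)/N. If the number t of changed votes satisfies t < (m_n²/m_r²) · (1/(⌈m_n/m_r⌉ + 1)²) · (α/2) · N, then under v' candidate A wins strictly more than half of the K regions, i.e. regional voting still selects A. -/

import Mathlib

/-!
Changing votes inside `U` can only affect regions that meet `U`, and every other region keeps
its A-majority. A block of side `m_n` meets at most `c + 1` region columns and rows, where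
`c = ⌈m_n/m_r⌉`, so at most `B (c + 1)²` regions are touched. On the other hand `t = α B m_n²`,
and a region holds at most `m_r²` cells, so `N ≤ m_r² K`; the noise bound then gives
`2 B (c + 1)² < K`, i.e. fewer than half of the regions are touched.
-/

/-- The nation: the set of cells `{0,…,L−1} × {0,…,M−1} ⊆ ℤ²`. -/
noncomputable def nation (L M : ℤ) : Finset (ℤ × ℤ) :=
  Finset.Ico 0 L ×ˢ Finset.Ico 0 M

/-- The region index of a cell `(x, y)` for the (unshifted) partition into `m × m` squares:
`(⌊x/m⌋, ⌊y/m⌋)`. -/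
def regionIdx (m : ℤ) (p : ℤ × ℤ) : ℤ × ℤ :=
  (p.1.fdiv m, p.2.fdiv m)

/-- The `mn × mn` noise-concentrated block at position `(u, v)`. -/
noncomputable def noiseBlock (mn u v : ℤ) : Finset (ℤ × ℤ) :=
  Finset.Ico u (u + mn) ×ˢ Finset.Ico v (v + mn)

/-- The number of votes that candidate `c` (`true` = A, `false` = B) receives in the region
with index `r` under voting `v`. -/
noncomputable def votesIn (L M mr : ℤ) (v : ℤ × ℤ → Bool) (r : ℤ × ℤ) (c : Bool) : ℕ :=
  ((nation L M).filter (fun p => regionIdx mr p = r ∧ v p = c)).card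

lemma Int.fdiv_eq_iff_mem_Ico {m x q : ℤ} (hm : 0 < m) :
    x.fdiv m = q ↔ x ∈ Finset.Ico (q * m) (q * m + m) := by
  rw [Int.fdiv_eq_ediv_of_nonneg _ hm.le, Int.ediv_eq_iff_of_pos hm, Finset.mem_Ico]

lemma nation_nonempty_iff {L M : ℤ} : (nation L M).Nonempty ↔ 0 < L ∧ 0 < M := by
  simp [nation, Finset.nonempty_product]

lemma card_nation {L M : ℤ} (hL : 0 ≤ L) (hM : 0 ≤ M) : ((nation L M).card : ℤ) = L * M := by
  simp [nation, Int.card_Ico, hL, hM]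

lemma card_noiseBlock (n u w : ℤ) : (noiseBlock n u w).card = n.toNat ^ 2 := by
  simp [noiseBlock, Int.card_Ico, sq]

section
variable {m : ℤ}

lemma regionIdx_eq_iff (hm : 0 < m) {p r : ℤ × ℤ} :
    regionIdx m p = r ↔ p ∈ noiseBlock m (r.1 * m) (r.2 * m) := by
  simp only [regionIdx, Prod.ext_iff, noiseBlock, Finset.mem_product, Int.fdiv_eq_iff_mem_Ico hm]

lemma card_le_sq_mul_card_image_regionIdx (hm : 0 < m) (s : Finset (ℤ × ℤ)) :
    (s.card : ℤ) ≤ m ^ 2 * (s.image (regionIdx m)).card := by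
  have h := Finset.card_le_mul_card_image s (m.toNat ^ 2) fun (r : ℤ × ℤ) _ => by
    rw [← card_noiseBlock m (r.1 * m) (r.2 * m)]
    exact Finset.card_le_card fun p hp => (regionIdx_eq_iff hm).1 (Finset.mem_filter.1 hp).2
  calc (s.card : ℤ) ≤ ((m.toNat ^ 2 * (s.image (regionIdx m)).card : ℕ) : ℤ) := mod_cast h
    _ = _ := by push_cast [Int.toNat_of_nonneg hm.le]; rfl

lemma card_image_fdiv_Ico_le (hm : 0 < m) {n : ℤ} {c : ℕ} (hn : n ≤ c * m) (u : ℤ) :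
    ((Finset.Ico u (u + n)).image (·.fdiv m)).card ≤ c + 1 := by
  calc _ ≤ (Finset.Ico (u.fdiv m) (u.fdiv m + (c + 1))).card := Finset.card_le_card ?_
    _ = c + 1 := by simp [Int.card_Ico]
  intro q hq
  obtain ⟨x, hx, rfl⟩ := Finset.mem_image.1 hq
  rw [Finset.mem_Ico] at hx ⊢
  rw [Int.fdiv_eq_ediv_of_nonneg _ hm.le, Int.fdiv_eq_ediv_of_nonneg _ hm.le]
  have hlast := Int.ediv_le_ediv hm (show x ≤ u + c * m by linarith)
  rw [Int.add_mul_ediv_right _ _ hm.ne'] at hlast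
  exact ⟨Int.ediv_le_ediv hm hx.1, by omega⟩

lemma card_image_regionIdx_noiseBlock_le (hm : 0 < m) {n : ℤ} {c : ℕ} (hn : n ≤ c * m)
    (u w : ℤ) : ((noiseBlock n u w).image (regionIdx m)).card ≤ (c + 1) ^ 2 := by
  rw [noiseBlock, show regionIdx m = Prod.map (·.fdiv m) (·.fdiv m) from rfl,
    Finset.prodMap_image_product, Finset.card_product, sq]
  exact Nat.mul_le_mul (card_image_fdiv_Ico_le hm hn u) (card_image_fdiv_Ico_le hm hn w)

end

section
variable {ι : Type*} {s : Finset ι} {n : ℤ} {pos : ι → ℤ × ℤ}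

lemma card_biUnion_noiseBlock (hn : 0 ≤ n)
    (hdisj : (s : Set ι).PairwiseDisjoint fun i => noiseBlock n (pos i).1 (pos i).2) :
    ((s.biUnion fun i => noiseBlock n (pos i).1 (pos i).2).card : ℤ) = s.card * n ^ 2 := by
  simp [Finset.card_biUnion hdisj, card_noiseBlock, hn]

lemma card_image_regionIdx_biUnion_noiseBlock_le {m : ℤ} {c : ℕ} (hm : 0 < m) (hn : n ≤ c * m) :
    ((s.biUnion fun i => noiseBlock n (pos i).1 (pos i).2).image (regionIdx m)).card ≤
      s.card * (c + 1) ^ 2 := by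
  rw [Finset.biUnion_image]
  exact Finset.card_biUnion_le_card_mul _ _ _ fun i _ =>
    card_image_regionIdx_noiseBlock_le hm hn _ _

end

section
variable {L M m : ℤ} {v v' : ℤ × ℤ → Bool}

lemma votesIn_congr {r : ℤ × ℤ} (h : ∀ p, regionIdx m p = r → v' p = v p) (c : Bool) :
    votesIn L M m v' r c = votesIn L M m v r c := by
  unfold votesIn
  congr 1
  exact Finset.filter_congr fun p _ => and_congr_right fun hp => by rw [h p hp]

lemma sdiff_image_regionIdx_subset_filter_wins {U : Finset (ℤ × ℤ)}
    (hwins : ∀ r ∈ (nation L M).image (regionIdx m),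
      votesIn L M m v r false < votesIn L M m v r true)
    (hagree : ∀ p ∉ U, v' p = v p) :
    (nation L M).image (regionIdx m) \ U.image (regionIdx m) ⊆
      ((nation L M).image (regionIdx m)).filter
        (fun r => votesIn L M m v' r false < votesIn L M m v' r true) := by
  intro r hr
  obtain ⟨hrN, hrU⟩ := Finset.mem_sdiff.1 hr
  have hfix : ∀ p, regionIdx m p = r → v' p = v p := fun p hp =>
    hagree p fun hpU => hrU (Finset.mem_image.2 ⟨p, hpU, hp⟩)
  rw [Finset.mem_filter, votesIn_congr hfix, votesIn_congr hfix]
  exact ⟨hrN, hwins r hrN⟩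

lemma card_image_regionIdx_lt_two_mul_card_filter_wins {U : Finset (ℤ × ℤ)}
    (hwins : ∀ r ∈ (nation L M).image (regionIdx m),
      votesIn L M m v r false < votesIn L M m v r true)
    (hagree : ∀ p ∉ U, v' p = v p)
    (htouched : 2 * (U.image (regionIdx m)).card < ((nation L M).image (regionIdx m)).card) :
    ((nation L M).image (regionIdx m)).card <
      2 * (((nation L M).image (regionIdx m)).filter
        (fun r => votesIn L M m v' r false < votesIn L M m v' r true)).card := by
  have := Finset.card_le_card (sdiff_image_regionIdx_subset_filter_wins hwins hagree)
  have := Finset.le_card_sdiff (U.image (regionIdx m)) ((nation L M).image (regionIdx m))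
  omega

end

lemma two_mul_mul_sq_lt {α B mn mr c N K : ℚ}
    (h : α * (B * mn ^ 2) < mn ^ 2 / mr ^ 2 * (1 / c ^ 2) * (α / 2) * N) (hN : N ≤ mr ^ 2 * K)
    (hα : 0 < α) (hmn : 0 < mn) (hmr : 0 < mr) (hc : 0 < c) :
    2 * (B * c ^ 2) < K := by
  field_simp at h
  have : mr ^ 2 * (2 * (B * c ^ 2)) < mr ^ 2 * K := by linarith
  exact lt_of_mul_lt_mul_left this (by positivity)

theorem regional_voting_accommodates_noise_general (L M mr mn : ℤ)
    (hmr : 1 ≤ mr) (hmn : 1 ≤ mn)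
    (v v' : ℤ × ℤ → Bool)
    (hAwins : ∀ r ∈ (nation L M).image (regionIdx mr),
      votesIn L M mr v r false < votesIn L M mr v r true)
    (Bblk : ℕ) (pos : Fin Bblk → ℤ × ℤ)
    (hdisj : ∀ i j : Fin Bblk, i ≠ j →
      Disjoint (noiseBlock mn (pos i).1 (pos i).2) (noiseBlock mn (pos j).1 (pos j).2))
    (U : Finset (ℤ × ℤ))
    (hU : U = Finset.univ.biUnion (fun i : Fin Bblk => noiseBlock mn (pos i).1 (pos i).2))
    (hchange : ∀ p, v' p = if p ∈ U ∧ v p = true then false else v p)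
    (a : ℕ) (ha : a = ((nation L M).filter (fun p => v p = true)).card)
    (α : ℚ) (hα : α = (a : ℚ) / ((L : ℚ) * (M : ℚ)))
    (hfrac : ((U.filter (fun p => v p = true)).card : ℚ) = α * (U.card : ℚ))
    (t : ℕ) (ht : t = (U.filter (fun p => v p = true)).card)
    (hnoise : (t : ℚ) < ((mn : ℚ) ^ 2 / (mr : ℚ) ^ 2) *
      (1 / ((⌈(mn : ℚ) / (mr : ℚ)⌉ : ℚ) + 1) ^ 2) * (α / 2) * ((L : ℚ) * (M : ℚ))) :
    ((nation L M).image (regionIdx mr)).card <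
      2 * (((nation L M).image (regionIdx mr)).filter
        (fun r => votesIn L M mr v' r false < votesIn L M mr v' r true)).card := by
  have hm : 0 < mr := by omega
  rw [← natCast_ceil_eq_intCast_ceil (by positivity)] at hnoise
  set c := ⌈(mn : ℚ) / mr⌉₊
  have hmnc : mn ≤ c * mr := by
    have h : (mn : ℚ) ≤ c * mr := (div_le_iff₀ (by positivity)).1 (Nat.le_ceil _)
    exact_mod_cast h
  -- with no A-voter the right-hand side of `hnoise` vanishes
  have ha0 : 0 < a := Nat.pos_of_ne_zero fun h0 => by
    simp [hα, h0] at hnoise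
    linarith [Nat.cast_nonneg (α := ℚ) t]
  obtain ⟨hL, hM⟩ : 0 < L ∧ 0 < M := nation_nonempty_iff.1 <|
    (Finset.card_pos.1 (ha ▸ ha0)).mono (Finset.filter_subset _ _)
  have hN : (L : ℚ) * M ≤ mr ^ 2 * ((nation L M).image (regionIdx mr)).card := by
    exact_mod_cast card_nation hL.le hM.le ▸ card_le_sq_mul_card_image_regionIdx hm (nation L M)
  have hUcard : (U.card : ℤ) = Bblk * mn ^ 2 := by
    simpa [hU] using card_biUnion_noiseBlock (s := Finset.univ) (n := mn) (pos := pos) (by omega)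
      fun i _ j _ hij => hdisj i j hij
  have hT : (U.image (regionIdx mr)).card ≤ Bblk * (c + 1) ^ 2 := by
    simpa [hU] using card_image_regionIdx_biUnion_noiseBlock_le (s := Finset.univ) (pos := pos) hm hmnc
  rw [ht, hfrac, (by exact_mod_cast hUcard : (U.card : ℚ) = Bblk * mn ^ 2)] at hnoise
  have hbudget : 2 * (Bblk * (c + 1) ^ 2) < ((nation L M).image (regionIdx mr)).card := by
    exact_mod_cast two_mul_mul_sq_lt hnoise hN (by rw [hα]; positivity)
      (by positivity) (by positivity) (by positivity)
  exact card_image_regionIdx_lt_two_mul_card_filter_wins hAwins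
    (fun p hp => by rw [hchange p, if_neg fun h => hp h.1]) (by omega)

/-- Corollary 1: suppose A wins every region under `v`, `v'` is obtained from `v` by switching
to B exactly the A-votes inside a union `U` of pairwise disjoint `m_n × m_n` blocks contained
in the nation, and the fraction of A-voters inside `U` equals the national fraction
`α = a/N`.  If the number `t` of changed votes satisfies
`t < (m_n²/m_r²) · (1/(⌈m_n/m_r⌉+1)²) · (α/2) · N`, then under `v'` candidate A still wins
strictly more than half of the `K` regions. -/
theorem regional_voting_accommodates_noise (L M mr mn : ℤ)
    (hL : 0 < L) (hM : 0 < M) (hmr : 1 ≤ mr) (hmn : 1 ≤ mn)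
    (hdL : mr ∣ L) (hdM : mr ∣ M)
    (v v' : ℤ × ℤ → Bool)
    (hAwins : ∀ r ∈ (nation L M).image (regionIdx mr),
      votesIn L M mr v r false < votesIn L M mr v r true)
    (Bblk : ℕ) (pos : Fin Bblk → ℤ × ℤ)
    (hdisj : ∀ i j : Fin Bblk, i ≠ j →
      Disjoint (noiseBlock mn (pos i).1 (pos i).2) (noiseBlock mn (pos j).1 (pos j).2))
    (hsub : ∀ i : Fin Bblk, noiseBlock mn (pos i).1 (pos i).2 ⊆ nation L M)
    (U : Finset (ℤ × ℤ))
    (hU : U = Finset.univ.biUnion (fun i : Fin Bblk => noiseBlock mn (pos i).1 (pos i).2))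
    (hchange : ∀ p, v' p = if p ∈ U ∧ v p = true then false else v p)
    (a : ℕ) (ha : a = ((nation L M).filter (fun p => v p = true)).card)
    (α : ℚ) (hα : α = (a : ℚ) / ((L : ℚ) * (M : ℚ)))
    (hfrac : ((U.filter (fun p => v p = true)).card : ℚ) = α * (U.card : ℚ))
    (t : ℕ) (ht : t = (U.filter (fun p => v p = true)).card)
    (hnoise : (t : ℚ) < ((mn : ℚ) ^ 2 / (mr : ℚ) ^ 2) *
      (1 / ((⌈(mn : ℚ) / (mr : ℚ)⌉ : ℚ) + 1) ^ 2) * (α / 2) * ((L : ℚ) * (M : ℚ))) :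
    ((nation L M).image (regionIdx mr)).card <
      2 * (((nation L M).image (regionIdx mr)).filter
        (fun r => votesIn L M mr v' r false < votesIn L M mr v' r true)).card :=
  regional_voting_accommodates_noise_general L M mr mn hmr hmn v v' hAwins Bblk pos hdisj U hU
    hchange a ha α hα hfrac t ht hnoise
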